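/- arXiv:1908.02535 — 4 statements merged into one kernel-verified Lean document; each statement's English description precedes it below -/
import Mathlib

section
/- For every $L > 0$, the function $u(t) = e^{2\pi t / L} \cos^2(t)$ is strictly increasing on the interval $[-h(L), h(L)]$, where $h(L) = \arccos(\tanh(L/2))$. -/
open Real

/-! The derivative of `exp (c t) cos² t` is `exp (c t) cos t (c cos t - 2 sin t)`, which is positive
wherever `cos t > 0` and `tan t < c / 2`. On `(-π/2, h(L))` the second condition follows from the
monotonicity of `tan`, since `tan h(L) = 1 / sinh (L/2) < 2 / L ≤ π / L`. -/

lemma tan_arccos_tanh (x : ℝ) : tan (arccos (tanh x)) = (sinh x)⁻¹ := by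
  have hsqrt : √(1 - tanh x ^ 2) = (cosh x)⁻¹ := by
    rw [sqrt_eq_iff_eq_sq (by nlinarith [tanh_sq_lt_one x]) (by positivity), tanh_eq_sinh_div_cosh]
    field_simp
    linarith [cosh_sq x]
  rw [tan_arccos, hsqrt, tanh_eq_sinh_div_cosh]
  field_simp

lemma hasDerivAt_exp_mul_mul_cos_sq (c t : ℝ) :
    HasDerivAt (fun t => exp (c * t) * cos t ^ 2)
      (exp (c * t) * cos t * (c * cos t - 2 * sin t)) t := by
  have hexp : HasDerivAt (fun t => exp (c * t)) (exp (c * t) * c) t := by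
    simpa using ((hasDerivAt_id t).const_mul c).exp
  refine (hexp.fun_mul ((hasDerivAt_cos t).fun_pow 2)).congr_deriv ?_
  norm_num
  ring

lemma strictMonoOn_exp_mul_mul_cos_sq_of_tan_le {c a : ℝ} (ha : a < π / 2) (htan : tan a ≤ c / 2) :
    StrictMonoOn (fun t => exp (c * t) * cos t ^ 2) (Set.Icc (-(π / 2)) a) := by
  refine strictMonoOn_of_deriv_pos (convex_Icc _ _) (by fun_prop) fun t ht => ?_
  rw [interior_Icc] at ht
  have hcos : 0 < cos t := cos_pos_of_mem_Ioo ⟨ht.1, ht.2.trans ha⟩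
  have htan_t : tan t < c / 2 :=
    (strictMonoOn_tan ⟨ht.1, ht.2.trans ha⟩ ⟨ht.1.trans ht.2, ha⟩ ht.2).trans_le htan
  have hsin : 2 * sin t < c * cos t := by
    rw [tan_eq_sin_div_cos, div_lt_iff₀ hcos] at htan_t
    linarith
  rw [(hasDerivAt_exp_mul_mul_cos_sq c t).deriv]
  have : 0 < c * cos t - 2 * sin t := by linarith
  positivity

/-- For every `L > 0`, the function `u(t) = e^{2πt/L} cos²(t)` is strictly increasing
on `[-h(L), h(L)]`, where `h(L) = arccos(tanh(L/2))`. -/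
theorem strictMonoOn_exp_mul_cos_sq (L : ℝ) (hL : 0 < L) :
    StrictMonoOn (fun t : ℝ => Real.exp (2 * π * t / L) * Real.cos t ^ 2)
      (Set.Icc (-(Real.arccos (Real.tanh (L / 2)))) (Real.arccos (Real.tanh (L / 2)))) := by
  set h := arccos (tanh (L / 2))
  have htanh : 0 < tanh (L / 2) := by
    rw [tanh_eq_sinh_div_cosh]
    exact div_pos (sinh_pos_iff.mpr (half_pos hL)) (cosh_pos _)
  have hh : h < π / 2 := arccos_lt_pi_div_two.mpr htanh
  have htan : tan h ≤ 2 * π / L / 2 := calc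
    tan h = (sinh (L / 2))⁻¹ := tan_arccos_tanh _
    _ ≤ (L / 2)⁻¹ := inv_anti₀ (half_pos hL) (self_lt_sinh_iff.mpr (half_pos hL)).le
    _ ≤ 2 * π / L / 2 := by
      rw [inv_div, div_div, div_le_div_iff₀ hL (by positivity)]
      nlinarith [pi_gt_three]
  have hsub : Set.Icc (-h) h ⊆ Set.Icc (-(π / 2)) h :=
    Set.Icc_subset_Icc_left (neg_le_neg hh.le)
  convert (strictMonoOn_exp_mul_mul_cos_sq_of_tan_le hh htan).mono hsub using 4
  ring
end

section
/- Let $L > 0$, set $h(L) = \arccos(\tanh(L/2))$ and $s(L) = 2\pi h(L)/L$. Let $f$ be a holomorphic function on the disk $\{z \in \mathbb{C} : |z| < e^{s(L)}\}$ with $f(0) = 0$, and let $1 \leq c \leq e^{s(L)}$, with $c$ in the domain where $f$ is defined up to its boundary circle (i.e. $c < e^{s(L)}$, or $f$ extends continuously to $|z| = c$). Then for every $z$ with $e^{-s(L)} < |z| \leq c$, one has $|f(z)|\,\cos^2\!\Big(\frac{L}{2\pi}\log|z|\Big) \leq \Big(\sup_{|w| = c} |f(w)|\Big)\,\cos^2\!\Big(\frac{L}{2\pi}\log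 c\Big)$. -/
/-!
Dividing by `z` (Schwarz's lemma, via the maximum modulus principle applied to `f z / z`) gives
`|f z| ≤ |z| sup_{|w|=c} |f w| / c`, so it suffices that `r ↦ r cos²((L/2π) log r)` is monotone
on `[e^{-s(L)}, e^{s(L)}]`. In the variable `t = (L/2π) log r` this is `t ↦ e^{2πt/L} cos² t`,
whose derivative has the sign of `π/L - tan t`; and `tan (h(L)) = 1 / sinh (L/2) ≤ π/L`.
-/

open Real

/-- Half the angular width of the standard collar of a geodesic of length `L`. -/
noncomputable def hh (L : ℝ) : ℝ := Real.arccos (Real.tanh (L / 2))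

/-- The collar of a geodesic of length `L` is the annulus `e^{-s(L)} < |z| < e^{s(L)}`. -/
noncomputable def ss (L : ℝ) : ℝ := 2 * π * hh L / L

open Metric Set

theorem norm_le_div_mul_norm_of_diffContOnCl_ball {E : Type*} [NormedAddCommGroup E]
    [NormedSpace ℂ E] [CompleteSpace E] {f : ℂ → E} {r M : ℝ} (hr : 0 < r)
    (hf : DiffContOnCl ℂ f (ball 0 r)) (hf0 : f 0 = 0) (hM : ∀ w ∈ sphere (0 : ℂ) r, ‖f w‖ ≤ M)
    {z : ℂ} (hz : ‖z‖ ≤ r) :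
    ‖f z‖ ≤ M / r * ‖z‖ := by
  have hg : DiffContOnCl ℂ (dslope f 0) (ball 0 r) := by
    refine ⟨(Complex.differentiableOn_dslope (ball_mem_nhds 0 hr)).mpr hf.differentiableOn, ?_⟩
    rw [closure_ball (0 : ℂ) hr.ne']
    refine (continuousOn_dslope (closedBall_mem_nhds 0 hr)).mpr ⟨?_, ?_⟩
    · simpa only [closure_ball (0 : ℂ) hr.ne'] using hf.continuousOn
    · exact hf.differentiableAt isOpen_ball (mem_ball_self hr)
  have hg_frontier : ∀ w ∈ frontier (ball (0 : ℂ) r), ‖dslope f 0 w‖ ≤ M / r := by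
    intro w hw
    rw [frontier_ball (0 : ℂ) hr.ne'] at hw
    have hwr : ‖w‖ = r := mem_sphere_zero_iff_norm.mp hw
    have hw0 : w ≠ 0 := ne_zero_of_norm_ne_zero (hwr.trans_ne hr.ne')
    rw [dslope_of_ne f hw0, slope_def_module, hf0, sub_zero, sub_zero, norm_smul, norm_inv, hwr,
      inv_mul_eq_div]
    exact div_le_div_of_nonneg_right (hM w hw) hr.le
  have hgz : ‖dslope f 0 z‖ ≤ M / r :=
    Complex.norm_le_of_forall_mem_frontier_norm_le isBounded_ball hg hg_frontier
      (by rwa [closure_ball (0 : ℂ) hr.ne', mem_closedBall_zero_iff])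
  have hfz : f z = z • dslope f 0 z := by
    simpa only [sub_zero, hf0] using (sub_smul_dslope f 0 z).symm
  rw [hfz, norm_smul, mul_comm]
  exact mul_le_mul_of_nonneg_right hgz (norm_nonneg z)

theorem monotoneOn_exp_mul_mul_cos_sq (a : ℝ) :
    MonotoneOn (fun t => exp (2 * a * t) * cos t ^ 2) (Icc (-(π / 2)) (arctan a)) := by
  have hderiv : ∀ t, HasDerivAt (fun t => exp (2 * a * t) * cos t ^ 2)
      (2 * exp (2 * a * t) * cos t * (a * cos t - sin t)) t := fun t =>
    (((hasDerivAt_id' t).const_mul (2 * a)).exp.fun_mul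
      ((hasDerivAt_cos t).fun_pow 2)).congr_deriv (by push_cast; ring)
  refine monotoneOn_of_deriv_nonneg (convex_Icc _ _)
    (fun t _ => (hderiv t).continuousAt.continuousWithinAt)
    (fun t _ => (hderiv t).differentiableAt.differentiableWithinAt) fun t ht => ?_
  rw [interior_Icc] at ht
  have hcos : 0 < cos t :=
    cos_pos_of_mem_Ioo ⟨ht.1, ht.2.trans (arctan_lt_pi_div_two a)⟩
  have htan : tan t < a := by
    simpa only [tan_arctan] using
      tan_lt_tan_of_lt_of_lt_pi_div_two ht.1 (arctan_lt_pi_div_two a) ht.2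
  have hsin : sin t ≤ a * cos t := by
    rw [tan_eq_sin_div_cos, div_lt_iff₀ hcos] at htan
    exact htan.le
  rw [(hderiv t).deriv]
  exact mul_nonneg (by positivity) (sub_nonneg.mpr hsin)

theorem hh_eq_arctan {L : ℝ} (hL : 0 < L) : hh L = arctan (sinh (L / 2))⁻¹ := by
  have hcosh := cosh_pos (L / 2)
  have hsinh : 0 < sinh (L / 2) := sinh_pos_iff.mpr (half_pos hL)
  have htanh : tanh (L / 2) = sinh (L / 2) / cosh (L / 2) := tanh_eq_sinh_div_cosh _
  have hsqrt : √(1 - tanh (L / 2) ^ 2) = (cosh (L / 2))⁻¹ := by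
    rw [← sqrt_sq (inv_pos.mpr hcosh).le, htanh]
    congr 1
    field_simp
    linarith [cosh_sq_sub_sinh_sq (L / 2)]
  rw [hh, arccos_eq_arctan (htanh ▸ div_pos hsinh hcosh), hsqrt, htanh]
  field_simp

theorem hh_le_arctan {L : ℝ} (hL : 0 < L) : hh L ≤ arctan (π / L) := by
  rw [hh_eq_arctan hL, arctan_le_arctan_iff,
    inv_le_iff_one_le_mul₀ (sinh_pos_iff.mpr (half_pos hL)), div_mul_eq_mul_div, le_div_iff₀ hL]
  nlinarith [self_le_sinh_iff.mpr (half_pos hL).le, pi_gt_three]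

theorem collar_weight_monotoneOn {L : ℝ} (hL : 0 < L) :
    MonotoneOn (fun r => r * cos (L / (2 * π) * log r) ^ 2) (Icc (exp (-ss L)) (exp (ss L))) := by
  have hscale : 0 < L / (2 * π) := by positivity
  have hss : L / (2 * π) * ss L = hh L := by unfold ss; field_simp
  have hmaps : MapsTo (fun r => L / (2 * π) * log r) (Icc (exp (-ss L)) (exp (ss L)))
      (Icc (-(π / 2)) (arctan (π / L))) := by
    intro r ⟨hr1, hr2⟩
    have hr0 := (exp_pos _).trans_le hr1
    have hlog1 : -ss L ≤ log r := (le_log_iff_exp_le hr0).mpr hr1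
    have hlog2 : log r ≤ ss L := (log_le_iff_le_exp hr0).mpr hr2
    have hh_le := hh_le_arctan hL
    have := arctan_lt_pi_div_two (π / L)
    constructor <;> nlinarith
  have hlog_mono : MonotoneOn (fun r => L / (2 * π) * log r) (Icc (exp (-ss L)) (exp (ss L))) :=
    fun r hr r' _ hrr' =>
      mul_le_mul_of_nonneg_left (log_le_log ((exp_pos _).trans_le hr.1) hrr') hscale.le
  refine ((monotoneOn_exp_mul_mul_cos_sq (π / L)).comp hlog_mono hmaps).congr fun r hr => ?_
  have hr0 := (exp_pos _).trans_le hr.1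
  simp only [Function.comp]
  rw [show 2 * (π / L) * (L / (2 * π) * log r) = log r by field_simp, exp_log hr0]

theorem collar_max_principle_bound_general
    (L : ℝ) (hL : 0 < L) (f : ℂ → ℂ)
    (hf : DifferentiableOn ℂ f (Metric.ball (0 : ℂ) (Real.exp (ss L))))
    (hf0 : f 0 = 0)
    (c : ℝ) (hc2 : c ≤ Real.exp (ss L))
    (hfc : ContinuousOn f (Metric.closedBall (0 : ℂ) c))
    (z : ℂ) (hz1 : Real.exp (-(ss L)) < ‖z‖) (hz2 : ‖z‖ ≤ c) :
    ‖f z‖ * Real.cos (L / (2 * π) * Real.log (‖z‖)) ^ 2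
      ≤ sSup ((fun w => ‖f w‖) '' Metric.sphere (0 : ℂ) c)
        * Real.cos (L / (2 * π) * Real.log c) ^ 2 := by
  set M := sSup ((fun w => ‖f w‖) '' sphere (0 : ℂ) c)
  have hc0 : 0 < c := (exp_pos _).trans (hz1.trans_le hz2)
  have hM : ∀ w ∈ sphere (0 : ℂ) c, ‖f w‖ ≤ M := fun w hw =>
    le_csSup ((isCompact_sphere 0 c).bddAbove_image
      (hfc.mono sphere_subset_closedBall).norm) ⟨w, hw, rfl⟩
  have hM0 : 0 ≤ M := (norm_nonneg _).trans (hM c (by simp [hc0.le]))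
  have hfD : DiffContOnCl ℂ f (ball 0 c) :=
    ⟨hf.mono (ball_subset_ball hc2), by rwa [closure_ball (0 : ℂ) hc0.ne']⟩
  have hweight := collar_weight_monotoneOn hL ⟨hz1.le, hz2.trans hc2⟩
    ⟨hz1.le.trans hz2, hc2⟩ hz2
  calc ‖f z‖ * cos (L / (2 * π) * log ‖z‖) ^ 2
      ≤ M / c * ‖z‖ * cos (L / (2 * π) * log ‖z‖) ^ 2 := by
        gcongr
        exact norm_le_div_mul_norm_of_diffContOnCl_ball hc0 hfD hf0 hM hz2
    _ ≤ M / c * (c * cos (L / (2 * π) * log c) ^ 2) := by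
        rw [mul_assoc]
        exact mul_le_mul_of_nonneg_left hweight (by positivity)
    _ = M * cos (L / (2 * π) * log c) ^ 2 := by field_simp

/-- The positive Laurent part attains its maximal pointwise norm on the boundary:
if `f` is holomorphic on `{|z| < e^{s(L)}}` with `f 0 = 0` and continuous up to
`|z| = c` with `1 ≤ c ≤ e^{s(L)}`, then for `e^{-s(L)} < |z| ≤ c`,
`|f z| cos²((L/2π) log|z|) ≤ (sup_{|w|=c} |f w|) cos²((L/2π) log c)`. -/
theorem collar_max_principle_bound
    (L : ℝ) (hL : 0 < L) (f : ℂ → ℂ)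
    (hf : DifferentiableOn ℂ f (Metric.ball (0 : ℂ) (Real.exp (ss L))))
    (hf0 : f 0 = 0)
    (c : ℝ) (hc1 : 1 ≤ c) (hc2 : c ≤ Real.exp (ss L))
    (hfc : ContinuousOn f (Metric.closedBall (0 : ℂ) c))
    (z : ℂ) (hz1 : Real.exp (-(ss L)) < ‖z‖) (hz2 : ‖z‖ ≤ c) :
    ‖f z‖ * Real.cos (L / (2 * π) * Real.log (‖z‖)) ^ 2
      ≤ sSup ((fun w => ‖f w‖) '' Metric.sphere (0 : ℂ) c)
        * Real.cos (L / (2 * π) * Real.log c) ^ 2 :=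
  collar_max_principle_bound_general L hL f hf hf0 c hc2 hfc z hz1 hz2
end

section
/- Let $c_0(L) = h(L) + \frac{1}{2}\sin(2 h(L))$ with $h(L) = \arccos(\tanh(L/2))$. Then $c_0(L) = \frac{\pi}{2} - \frac{L^3}{12} + O(L^5)$ as $L \to 0^+$; that is, there exist constants $\delta > 0$ and $M > 0$ such that for all $0 < L < \delta$, $\left| c_0(L) - \frac{\pi}{2} + \frac{L^3}{12} \right| \leq M L^5$. -/
open Real

/-- `c₀(L) = h(L) + sin(2h(L))/2`. -/
noncomputable def c₀ (L : ℝ) : ℝ := hh L + Real.sin (2 * hh L) / 2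

/-!
Since `cos (h L) = tanh (L/2)` and `h' L = -1 / (2 cosh (L/2))`, differentiating gives
`c₀' L = 2 h' L cos² (h L) = -tanh² (L/2) / cosh (L/2)`. For `x ≥ 0` this lies within
`(3/2) x⁴` of `-x²` at `x = L/2`, because `tanh x ≤ x` and `cosh x ≤ exp (x²/2)`. The mean value
inequality, started at `c₀ 0 = π/2`, then gives the bound with `M = 3/32` for every `L > 0`.
-/

open Set

namespace Real

theorem one_sub_tanh_sq (x : ℝ) : 1 - tanh x ^ 2 = (cosh x ^ 2)⁻¹ := by
  have := cosh_sq x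
  have := (cosh_pos x).ne'
  rw [tanh_eq_sinh_div_cosh]
  field_simp
  linarith

theorem hasDerivAt_tanh (x : ℝ) : HasDerivAt tanh (cosh x ^ 2)⁻¹ x := by
  have h := (hasDerivAt_sinh x).div (hasDerivAt_cosh x) (cosh_pos x).ne'
  rw [show tanh = sinh / cosh from funext tanh_eq_sinh_div_cosh]
  refine h.congr_deriv ?_
  have := cosh_sq x
  field_simp
  linarith

theorem tanh_le_self {x : ℝ} (hx : 0 ≤ x) : tanh x ≤ x := by
  have hmono : Monotone fun y => y - tanh y :=
    monotone_of_hasDerivAt_nonneg (fun y => (hasDerivAt_id y).sub (hasDerivAt_tanh y))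
      fun y => by simp only [Pi.zero_apply, ← one_sub_tanh_sq, sub_sub_cancel]; positivity
  simpa using hmono hx

theorem abs_tanh_sq_div_cosh_sub_sq_le {x : ℝ} (hx : 0 ≤ x) :
    |tanh x ^ 2 / cosh x - x ^ 2| ≤ 3 / 2 * x ^ 4 := by
  have hcosh : 0 < cosh x := cosh_pos x
  have hupper : tanh x ^ 2 / cosh x ≤ x ^ 2 :=
    calc tanh x ^ 2 / cosh x ≤ tanh x ^ 2 := div_le_self (sq_nonneg _) (one_le_cosh x)
      _ ≤ x ^ 2 := by
        have htanh : 0 ≤ tanh x := by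
          rw [tanh_eq_sinh_div_cosh]; exact div_nonneg (sinh_nonneg_iff.mpr hx) hcosh.le
        gcongr
        exact tanh_le_self hx
  have hcube : 1 - 3 / 2 * x ^ 2 ≤ (cosh x ^ 3)⁻¹ :=
    calc 1 - 3 / 2 * x ^ 2 ≤ exp (-(3 / 2 * x ^ 2)) := by linarith [add_one_le_exp (-(3 / 2 * x ^ 2))]
      _ = (exp (x ^ 2 / 2) ^ 3)⁻¹ := by rw [← exp_nat_mul, ← exp_neg]; ring_nf
      _ ≤ (cosh x ^ 3)⁻¹ := by gcongr; exact cosh_le_exp_half_sq x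
  have hlower : x ^ 2 * (1 - 3 / 2 * x ^ 2) ≤ tanh x ^ 2 / cosh x :=
    calc x ^ 2 * (1 - 3 / 2 * x ^ 2) ≤ x ^ 2 * (cosh x ^ 3)⁻¹ := by gcongr
      _ ≤ sinh x ^ 2 * (cosh x ^ 3)⁻¹ := by gcongr; exact self_le_sinh_iff.mpr hx
      _ = tanh x ^ 2 / cosh x := by rw [tanh_eq_sinh_div_cosh]; field_simp
  rw [abs_le]
  constructor <;> nlinarith

end Real

theorem abs_sub_le_mul_pow_succ_of_abs_deriv_le {f f' : ℝ → ℝ} {C X : ℝ} {n : ℕ}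
    (hf : ∀ x ∈ Icc 0 X, HasDerivAt f (f' x) x) (hf' : ∀ x ∈ Ico 0 X, |f' x| ≤ C * x ^ n)
    (hC : 0 ≤ C) (hX : 0 ≤ X) : |f X - f 0| ≤ C * X ^ (n + 1) := by
  have hbound : ∀ x ∈ Ico 0 X, ‖f' x‖ ≤ C * X ^ n := fun x hx =>
    (hf' x hx).trans (by gcongr; exacts [hx.1, hx.2.le])
  have := norm_image_sub_le_of_norm_deriv_le_segment'
    (fun x hx => (hf x hx).hasDerivWithinAt) hbound X ⟨hX, le_rfl⟩
  rwa [sub_zero, mul_assoc, ← pow_succ] at this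

theorem cos_hh (L : ℝ) : cos (hh L) = tanh (L / 2) :=
  cos_arccos (neg_one_lt_tanh _).le (tanh_lt_one _).le

theorem hasDerivAt_hh (L : ℝ) : HasDerivAt hh (-(2 * cosh (L / 2))⁻¹) L := by
  have h := (hasDerivAt_arccos (neg_one_lt_tanh (L / 2)).ne' (tanh_lt_one (L / 2)).ne).comp L
    ((hasDerivAt_tanh (L / 2)).comp L ((hasDerivAt_id L).div_const 2))
  refine h.congr_deriv ?_
  have := (cosh_pos (L / 2)).ne'
  rw [one_sub_tanh_sq, sqrt_inv, sqrt_sq (cosh_pos _).le]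
  field_simp

theorem hasDerivAt_c₀ (L : ℝ) : HasDerivAt c₀ (-(tanh (L / 2) ^ 2 / cosh (L / 2))) L := by
  have h := hasDerivAt_hh L
  refine (h.add (((h.const_mul 2).sin).div_const 2)).congr_deriv ?_
  have := (cosh_pos (L / 2)).ne'
  rw [cos_two_mul, cos_hh]
  field_simp
  ring

theorem c₀_zero : c₀ 0 = π / 2 := by
  simp [c₀, hh, mul_div_cancel₀]

/-- `c₀(L) = π/2 - L³/12 + O(L⁵)` as `L → 0⁺`. -/
theorem c₀_asymptotic :
    ∃ δ > (0 : ℝ), ∃ M > (0 : ℝ), ∀ L : ℝ, 0 < L → L < δ →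
      |c₀ L - π / 2 + L ^ 3 / 12| ≤ M * L ^ 5 := by
  refine ⟨1, one_pos, 3 / 32, by norm_num, fun L hL _ => ?_⟩
  have hderiv (s : ℝ) : HasDerivAt (fun s => c₀ s + s ^ 3 / 12)
      (-(tanh (s / 2) ^ 2 / cosh (s / 2)) + s ^ 2 / 4) s := by
    refine ((hasDerivAt_c₀ s).add ((hasDerivAt_pow 3 s).div_const 12)).congr_deriv ?_
    norm_num
    ring
  have hbound (s : ℝ) (hs : s ∈ Ico 0 L) :
      |-(tanh (s / 2) ^ 2 / cosh (s / 2)) + s ^ 2 / 4| ≤ 3 / 32 * s ^ 4 := by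
    have := abs_tanh_sq_div_cosh_sub_sq_le (x := s / 2) (by linarith [hs.1])
    rw [show -(tanh (s / 2) ^ 2 / cosh (s / 2)) + s ^ 2 / 4
      = -(tanh (s / 2) ^ 2 / cosh (s / 2) - (s / 2) ^ 2) by ring, abs_neg]
    linarith
  have := abs_sub_le_mul_pow_succ_of_abs_deriv_le (fun s _ => hderiv s) hbound
    (by norm_num) hL.le
  rw [c₀_zero] at this
  convert this using 2
  ring
end

section
/- Both functions $L \mapsto \frac{\sinh(L/2)}{\sqrt{L}}$ and $L \mapsto \frac{\sinh(L/2)}{\sqrt{c_0(L)}}$ are strictly increasing on $(0, \infty)$, where $c_0(L) = h(L) + \frac{1}{2}\sin(2 h(L))$ and $h(L) = \arccos(\tanh(L/2))$. Consequently $L \mapsto \frac{\sinh^2(L/2)}{\sqrt{L\, c_0(L)}}$ is strictly increasing on $(0, \infty)$. -/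
open Real

/- ### Auxiliary lemmas -/

lemma tanh_lt_one' (x : ℝ) : Real.tanh x < 1 := by
  rw [Real.tanh_eq_sinh_div_cosh, div_lt_one (Real.cosh_pos x)]
  nlinarith [Real.cosh_sub_sinh x, Real.exp_pos (-x)]

lemma neg_one_lt_tanh' (x : ℝ) : -1 < Real.tanh x := by
  rw [Real.tanh_eq_sinh_div_cosh, lt_div_iff₀ (Real.cosh_pos x)]
  nlinarith [Real.cosh_add_sinh x, Real.exp_pos x]

lemma tanh_pos' {x : ℝ} (hx : 0 < x) : 0 < Real.tanh x := by
  rw [Real.tanh_eq_sinh_div_cosh]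
  exact div_pos (by rwa [Real.sinh_pos_iff]) (Real.cosh_pos x)

lemma tanh_strictMono' : StrictMono Real.tanh := by
  intro x y hxy
  rw [Real.tanh_eq_sinh_div_cosh, Real.tanh_eq_sinh_div_cosh,
    div_lt_div_iff₀ (Real.cosh_pos x) (Real.cosh_pos y)]
  have h : Real.sinh (x - y) < 0 := by rwa [Real.sinh_neg_iff, sub_neg]
  rw [Real.sinh_sub] at h
  linarith

lemma hh_mem {L : ℝ} (hL : 0 < L) : hh L ∈ Set.Ioo 0 (π / 2) := by
  constructor
  · exact Real.arccos_pos.2 (tanh_lt_one' _)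
  · exact Real.arccos_lt_pi_div_two.2 (tanh_pos' (by linarith))

lemma hh_strictAnti : StrictAntiOn hh (Set.Ioi 0) := by
  intro x _ y _ hxy
  exact Real.strictAntiOn_arccos
    ⟨(neg_one_lt_tanh' _).le, (tanh_lt_one' _).le⟩
    ⟨(neg_one_lt_tanh' _).le, (tanh_lt_one' _).le⟩
    (tanh_strictMono' (by linarith))

lemma g_strictMono : StrictMonoOn (fun θ : ℝ => θ + Real.sin (2 * θ) / 2) (Set.Icc 0 (π / 2)) := by
  apply strictMonoOn_of_deriv_pos (convex_Icc _ _)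
  · fun_prop
  · intro x hx
    rw [interior_Icc] at hx
    have hd : HasDerivAt (fun θ : ℝ => θ + Real.sin (2 * θ) / 2)
        (1 + Real.cos (2 * x) * (2 * 1) / 2) x :=
      (hasDerivAt_id x).add ((((hasDerivAt_id x).const_mul 2).sin).div_const 2)
    rw [hd.deriv]
    have : Real.cos π < Real.cos (2 * x) :=
      Real.cos_lt_cos_of_nonneg_of_le_pi (by linarith [hx.1]) le_rfl (by linarith [hx.2])
    rw [Real.cos_pi] at this
    linarith

lemma c₀_pos {L : ℝ} (hL : 0 < L) : 0 < c₀ L := by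
  obtain ⟨h1, h2⟩ := hh_mem hL
  have : 0 ≤ Real.sin (2 * hh L) :=
    Real.sin_nonneg_of_nonneg_of_le_pi (by linarith) (by linarith)
  unfold c₀; linarith

lemma c₀_strictAnti : StrictAntiOn c₀ (Set.Ioi 0) := by
  intro x hx y hy hxy
  have h1 := hh_mem (Set.mem_Ioi.1 hx)
  have h2 := hh_mem (Set.mem_Ioi.1 hy)
  exact g_strictMono ⟨h2.1.le, h2.2.le⟩ ⟨h1.1.le, h1.2.le⟩ (hh_strictAnti hx hy hxy)

lemma strictConvexOn_cosh' : StrictConvexOn ℝ Set.univ (fun x : ℝ => Real.exp x + Real.exp (-x)) := by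
  have h1 : StrictConvexOn ℝ Set.univ (fun x : ℝ => Real.exp (-x)) := by
    refine ⟨convex_univ, ?_⟩
    intro x _ y _ hxy a b ha hb hab
    have := strictConvexOn_exp.2 (Set.mem_univ (-x)) (Set.mem_univ (-y))
      (fun h => hxy (neg_injective h)) ha hb hab
    simpa [smul_eq_mul, mul_neg, neg_add, add_comm] using this
  exact strictConvexOn_exp.add h1

lemma slope_cosh {x y : ℝ} (hx : 0 < x) (hxy : x < y) :
    (Real.cosh x - 1) / x < (Real.cosh y - 1) / y := by
  have := strictConvexOn_cosh'.secant_strict_mono (Set.mem_univ (0 : ℝ))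
    (Set.mem_univ x) (Set.mem_univ y) hx.ne' (hx.trans hxy).ne' hxy
  simp only [Real.exp_zero, neg_zero, sub_zero] at this
  have hex : Real.exp x + Real.exp (-x) = 2 * Real.cosh x := by
    rw [Real.cosh_eq]; ring
  have hey : Real.exp y + Real.exp (-y) = 2 * Real.cosh y := by
    rw [Real.cosh_eq]; ring
  rw [hex, hey] at this
  have hy : 0 < y := hx.trans hxy
  rw [div_lt_div_iff₀ hx hy] at this ⊢
  nlinarith

lemma sinh_half_sq (L : ℝ) : Real.sinh (L / 2) ^ 2 = (Real.cosh L - 1) / 2 := by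
  have := Real.cosh_two_mul (L / 2)
  have h2 := Real.cosh_sq (L / 2)
  have : Real.cosh (2 * (L / 2)) = 2 * Real.sinh (L / 2) ^ 2 + 1 := by
    rw [Real.cosh_two_mul]; nlinarith
  rw [show 2 * (L / 2) = L by ring] at this
  linarith

lemma part1 : StrictMonoOn (fun L : ℝ => Real.sinh (L / 2) / Real.sqrt L) (Set.Ioi 0) := by
  intro x hx y hy hxy
  have hx' : (0 : ℝ) < x := hx
  have hy' : (0 : ℝ) < y := hy
  have hsx : (0 : ℝ) < Real.sqrt x := Real.sqrt_pos.2 hx'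
  have hsy : (0 : ℝ) < Real.sqrt y := Real.sqrt_pos.2 hy'
  have hnx : 0 < Real.sinh (x / 2) := Real.sinh_pos_iff.2 (by linarith)
  have hny : 0 < Real.sinh (y / 2) := Real.sinh_pos_iff.2 (by linarith)
  have hsq : (Real.sinh (x / 2) / Real.sqrt x) ^ 2 < (Real.sinh (y / 2) / Real.sqrt y) ^ 2 := by
    rw [div_pow, div_pow, Real.sq_sqrt hx'.le, Real.sq_sqrt hy'.le,
      sinh_half_sq, sinh_half_sq]
    have := slope_cosh hx' hxy
    rw [div_lt_div_iff₀ hx' hy'] at this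
    rw [div_lt_div_iff₀ hx' hy']
    nlinarith
  exact lt_of_pow_lt_pow_left₀ 2 (by positivity) hsq

/-- Both `sinh(L/2)/√L` and `sinh(L/2)/√(c₀ L)` are strictly increasing on `(0, ∞)`;
consequently so is `sinh²(L/2)/√(L c₀(L))`. -/
theorem sinh_div_sqrt_strictMono :
    StrictMonoOn (fun L : ℝ => Real.sinh (L / 2) / Real.sqrt L) (Set.Ioi 0) ∧
    StrictMonoOn (fun L : ℝ => Real.sinh (L / 2) / Real.sqrt (c₀ L)) (Set.Ioi 0) ∧
    StrictMonoOn (fun L : ℝ => Real.sinh (L / 2) ^ 2 / Real.sqrt (L * c₀ L)) (Set.Ioi 0) := by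
  have part2 : StrictMonoOn (fun L : ℝ => Real.sinh (L / 2) / Real.sqrt (c₀ L)) (Set.Ioi 0) := by
    intro x hx y hy hxy
    have hx' : (0 : ℝ) < x := hx
    have hy' : (0 : ℝ) < y := hy
    have hcx : 0 < c₀ x := c₀_pos hx'
    have hcy : 0 < c₀ y := c₀_pos hy'
    have hc : c₀ y < c₀ x := c₀_strictAnti hx hy hxy
    have hsc : Real.sqrt (c₀ y) < Real.sqrt (c₀ x) := Real.sqrt_lt_sqrt hcy.le hc
    have hscy : 0 < Real.sqrt (c₀ y) := Real.sqrt_pos.2 hcy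
    have hnx : 0 < Real.sinh (x / 2) := Real.sinh_pos_iff.2 (by linarith)
    have hn : Real.sinh (x / 2) < Real.sinh (y / 2) := Real.sinh_lt_sinh.2 (by linarith)
    calc Real.sinh (x / 2) / Real.sqrt (c₀ x) ≤ Real.sinh (x / 2) / Real.sqrt (c₀ y) := by
          apply div_le_div_of_nonneg_left hnx.le hscy hsc.le
      _ < Real.sinh (y / 2) / Real.sqrt (c₀ y) := by gcongr
  refine ⟨part1, part2, ?_⟩
  intro x hx y hy hxy
  have hx' : (0 : ℝ) < x := hx
  have hy' : (0 : ℝ) < y := hy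
  have key : ∀ L : ℝ, 0 < L → Real.sinh (L / 2) ^ 2 / Real.sqrt (L * c₀ L) =
      (Real.sinh (L / 2) / Real.sqrt L) * (Real.sinh (L / 2) / Real.sqrt (c₀ L)) := by
    intro L hL
    rw [Real.sqrt_mul hL.le]
    ring
  dsimp only
  rw [key x hx', key y hy']
  have h1 := part1 hx hy hxy
  have h2 := part2 hx hy hxy
  have p1x : 0 < Real.sinh (x / 2) / Real.sqrt x := by
    apply div_pos (Real.sinh_pos_iff.2 (by linarith)) (Real.sqrt_pos.2 hx')
  have p2x : 0 < Real.sinh (x / 2) / Real.sqrt (c₀ x) := by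
    apply div_pos (Real.sinh_pos_iff.2 (by linarith)) (Real.sqrt_pos.2 (c₀_pos hx'))
  exact mul_lt_mul h1 h2.le p2x (by linarith)
end
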